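/- Let p be a prime, and let P and L be sets of points and lines in F_p^2 with |P|, |L| ≤ n. Suppose that for every set of at most 5n elements of F_p there is a Freiman ring-isomorphism of order 3 onto a subset of C (e.g., when 5n < log_2 log_6 log_{18}(p) − 1), and assume the complex Szemerédi–Trotter theorem: the number of point-line incidences among at most n points and n lines in C^2 is at most c·n^{4/3}. Then the number of incidences |{(q, l) ∈ P × L : q ∈ l}| is at most c·n^{4/3}. -/

import Mathlib

/-- The ℓ1-norm of a multivariate integer polynomial. -/
noncomputable def l1Norm {n : ℕ} (f : MvPolynomial (Fin n) ℤ) : ℕ :=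
  ∑ m ∈ f.support, (f.coeff m).natAbs

/-- A finite set of triples `(a, b, c)` is a proper family of lines (`a y + b x + c = 0`)
if each has `(a, b) ≠ (0, 0)` and no two distinct triples are proportional (so distinct
triples define distinct lines). -/
def GoodLines {F : Type} [CommRing F] (L : Finset (F × F × F)) : Prop :=
  (∀ l ∈ L, (l.1, l.2.1) ≠ (0, 0)) ∧
  ∀ l₁ ∈ L, ∀ l₂ ∈ L, ∀ t : F,
    l₂.1 = t * l₁.1 → l₂.2.1 = t * l₁.2.1 → l₂.2.2 = t * l₁.2.2 → l₁ = l₂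

open scoped Classical in
/-- The number of incidences between a finite set of points `(x, y)` and a finite set of
lines `a y + b x + c = 0`. -/
noncomputable def incidences {F : Type} [CommRing F] (P : Finset (F × F))
    (L : Finset (F × F × F)) : ℕ :=
  ((P ×ˢ L).filter fun q => q.2.1 * q.1.2 + q.2.2.1 * q.1.1 + q.2.2.2 = 0).card

/-! The coordinates of the points and lines form a set of at most `5n` elements of `𝔽_p`; a
Freiman ring-isomorphism of order 3 of this set into `ℂ` carries the configuration to one in `ℂ²`.
Incidence `a y + b x + c = 0` is a polynomial relation of degree 2 and `ℓ¹`-norm 3, and two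
coefficient vectors are proportional iff their `2 × 2` minors `a₂ b₁ - a₁ b₂`, ... vanish (degree 2,
norm 2), so both notions are preserved in both directions. The complex configuration thus has as
many incidences, at most `n` points and at most `n` distinct lines, and the complex bound applies. -/

open MvPolynomial

section L1Norm

variable {n : ℕ}

lemma l1Norm_add_le (f g : MvPolynomial (Fin n) ℤ) :
    l1Norm (f + g) ≤ l1Norm f + l1Norm g := by
  classical
  unfold l1Norm
  calc ∑ m ∈ (f + g).support, ((f + g).coeff m).natAbs
      ≤ ∑ m ∈ f.support ∪ g.support, ((f + g).coeff m).natAbs :=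
        Finset.sum_le_sum_of_subset support_add
    _ ≤ ∑ m ∈ f.support ∪ g.support, ((f.coeff m).natAbs + (g.coeff m).natAbs) :=
        Finset.sum_le_sum fun m _ => by rw [coeff_add]; exact Int.natAbs_add_le _ _
    _ = (∑ m ∈ f.support ∪ g.support, (f.coeff m).natAbs)
        + ∑ m ∈ f.support ∪ g.support, (g.coeff m).natAbs := Finset.sum_add_distrib
    _ = ∑ m ∈ f.support, (f.coeff m).natAbs + ∑ m ∈ g.support, (g.coeff m).natAbs := by
        congr 1 <;> refine (Finset.sum_subset (by simp) fun m _ hm => ?_).symm <;>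
          simp [notMem_support_iff.mp hm]

lemma l1Norm_neg (f : MvPolynomial (Fin n) ℤ) : l1Norm (-f) = l1Norm f := by
  simp only [l1Norm, support_neg, coeff_neg, Int.natAbs_neg]

lemma l1Norm_sub_le (f g : MvPolynomial (Fin n) ℤ) :
    l1Norm (f - g) ≤ l1Norm f + l1Norm g := by
  simpa only [sub_eq_add_neg, l1Norm_neg] using l1Norm_add_le f (-g)

lemma l1Norm_monomial_le (m : Fin n →₀ ℕ) (c : ℤ) : l1Norm (monomial m c) ≤ c.natAbs := by
  classical
  rcases eq_or_ne c 0 with rfl | hc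
  · simp [l1Norm]
  · simp [l1Norm, support_monomial, hc]

lemma l1Norm_X_le (i : Fin n) : l1Norm (X i : MvPolynomial (Fin n) ℤ) ≤ 1 :=
  l1Norm_monomial_le _ _

lemma l1Norm_X_mul_X_le (i j : Fin n) : l1Norm (X i * X j : MvPolynomial (Fin n) ℤ) ≤ 1 := by
  simpa only [X, monomial_mul, mul_one, Int.natAbs_one] using l1Norm_monomial_le _ (1 : ℤ)

lemma l1Norm_rename_le {k : ℕ} (σ : Fin k → Fin n) (f : MvPolynomial (Fin k) ℤ) :
    l1Norm (rename σ f) ≤ l1Norm f := by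
  conv_lhs => rw [f.as_sum, map_sum]
  refine (Finset.le_sum_of_subadditive l1Norm (by simp [l1Norm]) l1Norm_add_le _ _).trans ?_
  exact Finset.sum_le_sum fun m _ => by rw [rename_monomial]; exact l1Norm_monomial_le _ _

end L1Norm

lemma totalDegree_X_mul_X_le {σ : Type*} (i j : σ) :
    (X i * X j : MvPolynomial σ ℤ).totalDegree ≤ 2 :=
  (totalDegree_mul _ _).trans (add_le_add (totalDegree_X i).le (totalDegree_X j).le)

def IsFreimanRingIso {R K : Type*} [CommRing R] [CommRing K] (k : ℕ) (s : Set R) (Φ : R → K) :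
    Prop :=
  Set.InjOn Φ s ∧ ∀ (m : ℕ) (v : Fin m → R), (∀ i, v i ∈ s) →
    ∀ f : MvPolynomial (Fin m) ℤ, f.totalDegree ≤ k → l1Norm f ≤ k →
      (aeval v f = 0 ↔ aeval (Φ ∘ v) f = 0)

lemma exists_isFreimanRingIso {R K : Type*} [CommRing R] [CommRing K] {k : ℕ} (s : Finset R)
    (h : ∀ a : Fin s.card → R, Function.Injective a → ∃ b : Fin s.card → K,
      Function.Injective b ∧ ∀ f : MvPolynomial (Fin s.card) ℤ, f.totalDegree ≤ k →
        l1Norm f ≤ k → (aeval a f = 0 ↔ aeval b f = 0)) :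
    ∃ Φ : R → K, IsFreimanRingIso k s Φ := by
  classical
  set e := s.equivFin
  obtain ⟨b, hb, hbf⟩ := h (fun i => e.symm i) (Subtype.val_injective.comp e.symm.injective)
  let Φ : R → K := fun x => if hx : x ∈ s then b (e ⟨x, hx⟩) else 0
  have hΦ (x : R) (hx : x ∈ s) : Φ x = b (e ⟨x, hx⟩) := dif_pos hx
  refine ⟨Φ, fun x hx y hy hxy => ?_, fun m v hv f hdeg hnorm => ?_⟩
  · rw [hΦ x hx, hΦ y hy, hb.eq_iff, e.apply_eq_iff_eq, Subtype.mk.injEq] at hxy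
    exact hxy
  · set σ : Fin m → Fin s.card := fun i => e ⟨v i, hv i⟩
    have hΦv : Φ ∘ v = b ∘ σ := funext fun i => hΦ (v i) (hv i)
    have hv' : v = (fun i => (e.symm i : R)) ∘ σ := by ext i; simp [σ]
    rw [hΦv, hv', ← aeval_rename, ← aeval_rename]
    exact hbf _ ((totalDegree_rename_le _ _).trans hdeg) ((l1Norm_rename_le _ _).trans hnorm)

namespace IsFreimanRingIso

variable {R K : Type*} [CommRing R] [CommRing K] {k : ℕ} {s : Set R} {Φ : R → K}

lemma map_eq_zero_iff (hΦ : IsFreimanRingIso k s Φ) (hk : 1 ≤ k) {x : R} (hx : x ∈ s) :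
    Φ x = 0 ↔ x = 0 := by
  have := hΦ.2 1 ![x] (by simp [hx]) (X 0) ((totalDegree_X _).le.trans hk)
    ((l1Norm_X_le _).trans hk)
  simpa using this.symm

lemma mul_eq_mul_iff (hΦ : IsFreimanRingIso k s Φ) (hk : 2 ≤ k) {x y z w : R} (hx : x ∈ s)
    (hy : y ∈ s) (hz : z ∈ s) (hw : w ∈ s) :
    Φ x * Φ y = Φ z * Φ w ↔ x * y = z * w := by
  have := hΦ.2 4 ![x, y, z, w] (by simp [Fin.forall_fin_succ, *]) (X 0 * X 1 - X 2 * X 3)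
    ((totalDegree_sub _ _).trans (max_le ((totalDegree_X_mul_X_le _ _).trans hk)
      ((totalDegree_X_mul_X_le _ _).trans hk)))
    ((l1Norm_sub_le _ _).trans ((add_le_add (l1Norm_X_mul_X_le _ _)
      (l1Norm_X_mul_X_le _ _)).trans hk))
  simpa [sub_eq_zero] using this.symm

lemma mul_add_mul_add_eq_zero_iff (hΦ : IsFreimanRingIso k s Φ) (hk : 3 ≤ k) {a y b x c : R}
    (ha : a ∈ s) (hy : y ∈ s) (hb : b ∈ s) (hx : x ∈ s) (hc : c ∈ s) :
    Φ a * Φ y + Φ b * Φ x + Φ c = 0 ↔ a * y + b * x + c = 0 := by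
  have := hΦ.2 5 ![a, y, b, x, c] (by simp [Fin.forall_fin_succ, *])
    (X 0 * X 1 + X 2 * X 3 + X 4)
    ((totalDegree_add _ _).trans (max_le ((totalDegree_add _ _).trans
      (max_le ((totalDegree_X_mul_X_le _ _).trans (by omega))
        ((totalDegree_X_mul_X_le _ _).trans (by omega))))
      ((totalDegree_X _).le.trans (by omega))))
    ((l1Norm_add_le _ _).trans ((add_le_add ((l1Norm_add_le _ _).trans
      (add_le_add (l1Norm_X_mul_X_le _ _) (l1Norm_X_mul_X_le _ _))) (l1Norm_X_le _)).trans hk))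
  simpa using this.symm

end IsFreimanRingIso

lemma exists_eq_mul_of_cross_eq {F : Type*} [Field F] {a₁ b₁ c₁ a₂ b₂ c₂ : F}
    (h₁ : (a₁, b₁) ≠ (0, 0)) (hab : a₂ * b₁ = a₁ * b₂) (hac : a₂ * c₁ = a₁ * c₂)
    (hbc : b₂ * c₁ = b₁ * c₂) :
    ∃ t, a₂ = t * a₁ ∧ b₂ = t * b₁ ∧ c₂ = t * c₁ := by
  rcases eq_or_ne a₁ 0 with rfl | ha₁
  · have hb₁ : b₁ ≠ 0 := fun hb₁ => h₁ (by rw [hb₁])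
    refine ⟨b₂ / b₁, ?_, by field_simp, ?_⟩
    · simpa [hb₁] using hab
    · field_simp; linear_combination -hbc
  · refine ⟨a₂ / a₁, by field_simp, ?_, ?_⟩
    · field_simp; linear_combination -hab
    · field_simp; linear_combination -hac

section Transfer

variable {F K : Type} [CommRing K] {k : ℕ} {s : Set F} {Φ : F → K}

open scoped Classical in
theorem IsFreimanRingIso.incidences_image [CommRing F] (hΦ : IsFreimanRingIso k s Φ) (hk : 3 ≤ k)
    {P : Finset (F × F)} {L : Finset (F × F × F)} (hP : ∀ q ∈ P, q.1 ∈ s ∧ q.2 ∈ s)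
    (hL : ∀ l ∈ L, l.1 ∈ s ∧ l.2.1 ∈ s ∧ l.2.2 ∈ s) :
    incidences (P.image (Prod.map Φ Φ)) (L.image (Prod.map Φ (Prod.map Φ Φ))) =
      incidences P L := by
  have hinj : Set.InjOn (Prod.map (Prod.map Φ Φ) (Prod.map Φ (Prod.map Φ Φ))) ↑(P ×ˢ L) := by
    rintro ⟨⟨x, y⟩, a, b, c⟩ hql ⟨⟨x', y'⟩, a', b', c'⟩ hql' h
    simp only [Finset.coe_product, Set.mem_prod, Finset.mem_coe] at hql hql'
    simp only [Prod.map, Prod.mk.injEq] at h ⊢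
    obtain ⟨⟨hx, hy⟩, ha, hb, hc⟩ := And.intro (hP _ hql.1) (hL _ hql.2)
    obtain ⟨⟨hx', hy'⟩, ha', hb', hc'⟩ := And.intro (hP _ hql'.1) (hL _ hql'.2)
    exact ⟨⟨hΦ.1 hx hx' h.1.1, hΦ.1 hy hy' h.1.2⟩, hΦ.1 ha ha' h.2.1, hΦ.1 hb hb' h.2.2.1,
      hΦ.1 hc hc' h.2.2.2⟩
  unfold incidences
  rw [← Finset.prodMap_image_product, Finset.filter_image,
    Finset.card_image_of_injOn (hinj.mono (Finset.coe_subset.2 (Finset.filter_subset _ _)))]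
  refine congrArg Finset.card (Finset.filter_congr fun ⟨⟨x, y⟩, a, b, c⟩ hql => ?_)
  rw [Finset.mem_product] at hql
  obtain ⟨⟨hx, hy⟩, ha, hb, hc⟩ := And.intro (hP _ hql.1) (hL _ hql.2)
  exact hΦ.mul_add_mul_add_eq_zero_iff hk ha hy hb hx hc

open scoped Classical in
theorem GoodLines.image [Field F] (hΦ : IsFreimanRingIso k s Φ) (hk : 2 ≤ k)
    {L : Finset (F × F × F)} (hL : ∀ l ∈ L, l.1 ∈ s ∧ l.2.1 ∈ s ∧ l.2.2 ∈ s)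
    (hgood : GoodLines L) : GoodLines (L.image (Prod.map Φ (Prod.map Φ Φ))) := by
  constructor
  · rintro _ hl' h
    obtain ⟨⟨a, b, c⟩, hl, rfl⟩ := Finset.mem_image.1 hl'
    obtain ⟨ha, hb, -⟩ := hL _ hl
    simp only [Prod.map, Prod.mk.injEq] at h
    exact hgood.1 _ hl (Prod.ext ((hΦ.map_eq_zero_iff (by omega) ha).1 h.1)
      ((hΦ.map_eq_zero_iff (by omega) hb).1 h.2))
  · rintro _ hl₁' _ hl₂' t ha hb hc
    obtain ⟨⟨a₁, b₁, c₁⟩, hl₁, rfl⟩ := Finset.mem_image.1 hl₁'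
    obtain ⟨⟨a₂, b₂, c₂⟩, hl₂, rfl⟩ := Finset.mem_image.1 hl₂'
    obtain ⟨ha₁, hb₁, hc₁⟩ := hL _ hl₁
    obtain ⟨ha₂, hb₂, hc₂⟩ := hL _ hl₂
    simp only [Prod.map] at ha hb hc
    have cross {x₁ y₁ x₂ y₂ : F} (hx₁ : x₁ ∈ s) (hy₁ : y₁ ∈ s) (hx₂ : x₂ ∈ s) (hy₂ : y₂ ∈ s)
        (hx : Φ x₂ = t * Φ x₁) (hy : Φ y₂ = t * Φ y₁) : x₂ * y₁ = x₁ * y₂ :=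
      (hΦ.mul_eq_mul_iff hk hx₂ hy₁ hx₁ hy₂).1 (by rw [hx, hy]; ring)
    obtain ⟨t', ha', hb', hc'⟩ := exists_eq_mul_of_cross_eq (hgood.1 _ hl₁)
      (cross ha₁ hb₁ ha₂ hb₂ ha hb) (cross ha₁ hc₁ ha₂ hc₂ ha hc) (cross hb₁ hc₁ hb₂ hc₂ hb hc)
    rw [hgood.2 _ hl₁ _ hl₂ t' ha' hb' hc']

end Transfer

section Coordinates

variable {F : Type*} [DecidableEq F] (P : Finset (F × F)) (L : Finset (F × F × F))

def coordinates : Finset F :=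
  P.image Prod.fst ∪ P.image Prod.snd ∪ L.image Prod.fst ∪ L.image (·.2.1) ∪ L.image (·.2.2)

lemma card_coordinates_le : (coordinates P L).card ≤ 2 * P.card + 3 * L.card := by
  unfold coordinates
  grw [Finset.card_union_le, Finset.card_union_le, Finset.card_union_le, Finset.card_union_le,
    Finset.card_image_le, Finset.card_image_le, Finset.card_image_le, Finset.card_image_le,
    Finset.card_image_le]
  omega

lemma mem_coordinates_of_mem_points :
    ∀ q ∈ P, q.1 ∈ coordinates P L ∧ q.2 ∈ coordinates P L := by
  simp only [coordinates, Finset.mem_union, Finset.mem_image]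
  grind

lemma mem_coordinates_of_mem_lines :
    ∀ l ∈ L, l.1 ∈ coordinates P L ∧ l.2.1 ∈ coordinates P L ∧ l.2.2 ∈ coordinates P L := by
  simp only [coordinates, Finset.mem_union, Finset.mem_image]
  grind

end Coordinates

/-- Conditional Szemerédi–Trotter theorem in `F_p` with the optimal exponent `4/3`:
if every at most `5n` elements of `F_p` admit a Freiman ring-isomorphism of order `3`
onto a subset of `ℂ`, and the Szemerédi–Trotter bound `c n^{4/3}` holds for `n` points
and `n` lines in `ℂ²`, then at most `n` points and `n` lines in `F_p²` determine at most
`c n^{4/3}` incidences. -/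
theorem szemeredi_trotter_zmod {p : ℕ} (hp : p.Prime) (n : ℕ) (c : ℝ)
    (P : Finset (ZMod p × ZMod p)) (L : Finset (ZMod p × ZMod p × ZMod p))
    (hPn : P.card ≤ n) (hLn : L.card ≤ n) (hL : GoodLines L)
    (hrect : ∀ N : ℕ, N ≤ 5 * n → ∀ a : Fin N → ZMod p, Function.Injective a →
      ∃ b : Fin N → ℂ, Function.Injective b ∧
        ∀ f : MvPolynomial (Fin N) ℤ, f.totalDegree ≤ 3 → l1Norm f ≤ 3 →
          (MvPolynomial.aeval a f = 0 ↔ MvPolynomial.aeval b f = 0))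
    (hST : ∀ (P' : Finset (ℂ × ℂ)) (L' : Finset (ℂ × ℂ × ℂ)), GoodLines L' →
      P'.card ≤ n → L'.card ≤ n → (incidences P' L' : ℝ) ≤ c * (n : ℝ) ^ ((4 : ℝ) / 3)) :
    (incidences P L : ℝ) ≤ c * (n : ℝ) ^ ((4 : ℝ) / 3) := by
  have : Fact p.Prime := ⟨hp⟩
  obtain ⟨Φ, hΦ⟩ := exists_isFreimanRingIso (coordinates P L)
    (hrect _ ((card_coordinates_le P L).trans (by omega)))
  have hPcoord := mem_coordinates_of_mem_points P L
  have hLcoord := mem_coordinates_of_mem_lines P L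
  rw [← hΦ.incidences_image le_rfl hPcoord hLcoord]
  exact hST _ _ (hL.image hΦ (by norm_num) hLcoord) (Finset.card_image_le.trans hPn)
    (Finset.card_image_le.trans hLn)
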